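/- Let m ≥ 2 and let S be a LexOpt schedule of jobs with processing times p_1,…,p_n > 0 on m identical machines. Let f ≥ 1 be a real and k an integer with 0 ≤ k < m, and let p̂ satisfy 0 ≤ p̂_j ≤ p_j for every j (reductions only, with p̂_j = 0 modeling cancellation) such that the number of unstable jobs, i.e. jobs with p̂_j < p_j/f, is at most k. Then the schedule that keeps exactly the same job-to-machine assignment as S has makespan, measured with processing times p̂, at most 2f·(1 + ⌈k/(m−k)⌉)·C*_max(m, p̂). -/

import Mathlib

/-!
In a LexOpt schedule no single job can be moved profitably: for every job `j` and machine `i`,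
`C_{σ j} ≤ C_i + p_j`, since otherwise moving `j` to `i` would make the sorted load vector
lexicographically smaller. At most `k` machines carry an unstable job, so some stable machine `i₀`
has reduced load at most `m / (m - k) · C*_max(p̂) ≤ (1 + ⌈k / (m - k)⌉) · C*_max(p̂)`, and its
original load is at most `f` times that. For any machine `i` and job `j` on it,
`Ĉ_i ≤ C_i - p_j + p̂_j ≤ C_{i₀} + p̂_j ≤ f · Ĉ_{i₀} + C*_max(p̂)`, which gives the bound.
-/

open Finset

/-- Completion time (load) of machine `i` under schedule `σ` and processing times `p`. -/
noncomputable def mLoad {n m : ℕ} (p : Fin n → ℝ) (σ : Fin n → Fin m) (i : Fin m) : ℝ :=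
  ∑ j ∈ Finset.univ.filter (fun j => σ j = i), p j

/-- Makespan of schedule `σ`: the maximum machine completion time. -/
noncomputable def makespan {n m : ℕ} (p : Fin n → ℝ) (σ : Fin n → Fin m) : ℝ :=
  ⨆ i, mLoad p σ i

/-- Minimum makespan of the jobs with processing times `p` on `m` machines. -/
noncomputable def optMakespan {n : ℕ} (m : ℕ) (p : Fin n → ℝ) : ℝ :=
  ⨅ σ : Fin n → Fin m, makespan p σ

/-- The completion-time vector sorted in non-increasing order. -/
noncomputable def sortedDesc {m : ℕ} (C : Fin m → ℝ) : Fin m → ℝ :=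
  fun i => C (Tuple.sort C i.rev)

/-- A schedule is LexOpt if its non-increasingly sorted completion-time vector is
lexicographically at most that of every other schedule. -/
def IsLexOpt {n m : ℕ} (p : Fin n → ℝ) (σ : Fin n → Fin m) : Prop :=
  ∀ σ' : Fin n → Fin m, toLex (sortedDesc (mLoad p σ)) ≤ toLex (sortedDesc (mLoad p σ'))

section SortedLex

variable {m : ℕ}

theorem Antitone.toLex_lt_of_card_filter_le {u v : Fin m → ℝ} (hu : Antitone u) (hv : Antitone v)
    (a : ℝ) (hgt : ∀ t, a < t → #{x | t ≤ u x} = #{x | t ≤ v x})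
    (hlt : #{x | a ≤ u x} < #{x | a ≤ v x}) : toLex u < toLex v := by
  -- Above `a` the level sets of `u` and `v` have the same sizes, so the two antitone vectors
  -- agree on the first `c` positions; at position `c`, `v` is still `≥ a` but `u` is not.
  have not_lt_at : ∀ {w w' : Fin m → ℝ}, Antitone w → Antitone w' →
      (∀ t, a < t → #{x | t ≤ w x} = #{x | t ≤ w' x}) → ∀ r, a ≤ w r → ¬ w r < w' r := by
    intro w w' hw hw' hcount r har hlt'
    have hw_short : ¬ (r : ℕ) < #{x | w' r ≤ w x} := fun h =>
      hlt'.not_ge (Tuple.lt_card_ge_iff_apply_ge_of_antitone hw |>.1 h)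
    have hw'_long : (r : ℕ) < #{x | w' r ≤ w' x} :=
      Tuple.lt_card_ge_iff_apply_ge_of_antitone hw' |>.2 le_rfl
    rw [hcount _ (har.trans_lt hlt')] at hw_short
    exact hw_short hw'_long
  set c := #{x | a ≤ u x}
  have hc : c < m := hlt.trans_le ((card_filter_le _ _).trans (by simp))
  refine ⟨⟨c, hc⟩, fun r hr => ?_, ?_⟩
  · have hr : (r : ℕ) < c := hr
    have hur : a ≤ u r := Tuple.lt_card_ge_iff_apply_ge_of_antitone hu |>.1 hr
    have hvr : a ≤ v r := Tuple.lt_card_ge_iff_apply_ge_of_antitone hv |>.1 (hr.trans hlt)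
    exact le_antisymm (not_lt.1 (not_lt_at hv hu (fun t ht => (hgt t ht).symm) r hvr))
      (not_lt.1 (not_lt_at hu hv hgt r hur))
  · have hu_c : ¬ a ≤ u ⟨c, hc⟩ := fun h =>
      (Tuple.lt_card_ge_iff_apply_ge_of_antitone hu |>.2 h).false
    exact (not_le.1 hu_c).trans_le (Tuple.lt_card_ge_iff_apply_ge_of_antitone hv |>.1 hlt)

theorem antitone_sortedDesc (C : Fin m → ℝ) : Antitone (sortedDesc C) :=
  fun _ _ hij => Tuple.monotone_sort C (Fin.rev_le_rev.mpr hij)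

theorem card_filter_le_sortedDesc (C : Fin m → ℝ) (t : ℝ) :
    #{x | t ≤ sortedDesc C x} = #{x | t ≤ C x} :=
  card_equiv (Fin.revPerm.trans (Tuple.sort C)) fun x => by
    simp only [mem_filter, mem_univ, true_and]; rfl

theorem toLex_sortedDesc_lt_of_filter_eq_erase {L L' : Fin m → ℝ} {i : Fin m}
    (h : ∀ t, L i ≤ t → ({x | t ≤ L' x} : Finset (Fin m)) = ({x | t ≤ L x} : Finset _).erase i) :
    toLex (sortedDesc L') < toLex (sortedDesc L) := by
  refine (antitone_sortedDesc L').toLex_lt_of_card_filter_le (antitone_sortedDesc L) (L i)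
    (fun t ht => ?_) ?_ <;> simp only [card_filter_le_sortedDesc]
  · rw [h t ht.le, erase_eq_of_notMem (by simpa using ht)]
  · rw [h _ le_rfl]
    exact card_erase_lt_of_mem (by simp)

end SortedLex

section Loads

variable {n m : ℕ}

theorem mLoad_nonneg {p : Fin n → ℝ} (hp : ∀ j, 0 ≤ p j) (σ : Fin n → Fin m) (i : Fin m) :
    0 ≤ mLoad p σ i :=
  sum_nonneg fun j _ => hp j

theorem sum_mLoad (p : Fin n → ℝ) (σ : Fin n → Fin m) : ∑ i, mLoad p σ i = ∑ j, p j :=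
  sum_fiberwise univ σ p

theorem mLoad_le_makespan (p : Fin n → ℝ) (σ : Fin n → Fin m) (i : Fin m) :
    mLoad p σ i ≤ makespan p σ :=
  le_ciSup (Set.finite_range _).bddAbove i

theorem makespan_le [NeZero m] {p : Fin n → ℝ} {σ : Fin n → Fin m} {c : ℝ}
    (h : ∀ i, mLoad p σ i ≤ c) : makespan p σ ≤ c :=
  ciSup_le h

theorem le_optMakespan [NeZero m] {p : Fin n → ℝ} {c : ℝ}
    (h : ∀ σ : Fin n → Fin m, c ≤ makespan p σ) : c ≤ optMakespan m p :=
  le_ciInf h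

theorem optMakespan_nonneg [NeZero m] {p : Fin n → ℝ} (hp : ∀ j, 0 ≤ p j) :
    0 ≤ optMakespan m p :=
  le_optMakespan fun σ => (mLoad_nonneg hp σ 0).trans (mLoad_le_makespan p σ 0)

theorem le_optMakespan_of_nonneg [NeZero m] {p : Fin n → ℝ} (hp : ∀ j, 0 ≤ p j) (j : Fin n) :
    p j ≤ optMakespan m p :=
  le_optMakespan fun σ =>
    (single_le_sum (fun x _ => hp x) (by simp : j ∈ ({x | σ x = σ j} : Finset _))).trans
      (mLoad_le_makespan p σ (σ j))

theorem sum_le_mul_optMakespan [NeZero m] (p : Fin n → ℝ) :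
    ∑ j, p j ≤ m * optMakespan m p := by
  have hm : (0 : ℝ) < m := by simpa using NeZero.pos m
  rw [mul_comm, ← div_le_iff₀ hm]
  refine le_optMakespan fun σ => ?_
  rw [div_le_iff₀ hm, ← sum_mLoad p σ]
  calc ∑ i, mLoad p σ i ≤ ∑ _i : Fin m, makespan p σ :=
        sum_le_sum fun i _ => mLoad_le_makespan p σ i
    _ = makespan p σ * m := by simp [mul_comm]

theorem mLoad_le_mul_mLoad {p q : Fin n → ℝ} {σ : Fin n → Fin m} {i : Fin m} {c : ℝ}
    (h : ∀ j, σ j = i → p j ≤ c * q j) : mLoad p σ i ≤ c * mLoad q σ i := by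
  rw [mLoad, mLoad, mul_sum]
  exact sum_le_sum fun j hj => h j (mem_filter.1 hj).2

theorem mLoad_sub_le_mLoad_sub {p q : Fin n → ℝ} (hqp : ∀ j, q j ≤ p j) (σ : Fin n → Fin m)
    (j : Fin n) : mLoad q σ (σ j) - q j ≤ mLoad p σ (σ j) - p j := by
  have hj : j ∈ ({x | σ x = σ j} : Finset (Fin n)) := by simp
  rw [mLoad, mLoad, ← sum_erase_eq_sub hj, ← sum_erase_eq_sub hj]
  exact sum_le_sum fun x _ => hqp x

theorem mLoad_update_add (p : Fin n → ℝ) (σ : Fin n → Fin m) (j : Fin n) (i x : Fin m) :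
    mLoad p (Function.update σ j i) x + (if σ j = x then p j else 0) =
      mLoad p σ x + (if i = x then p j else 0) := by
  simp only [mLoad, sum_filter]
  rw [Fintype.sum_eq_add_sum_compl j, Fintype.sum_eq_add_sum_compl j (fun y => ite (σ y = x) _ _)]
  have hrest : ∑ y ∈ {j}ᶜ, (if Function.update σ j i y = x then p y else 0) =
      ∑ y ∈ {j}ᶜ, (if σ y = x then p y else 0) :=
    sum_congr rfl fun y hy => by rw [Function.update_of_ne (by simpa using hy)]
  rw [hrest, Function.update_self]
  ring

theorem exists_mul_mLoad_le_sum {p : Fin n → ℝ} (hp : ∀ j, 0 ≤ p j) (σ : Fin n → Fin m)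
    {s : Finset (Fin m)} (hs : s.Nonempty) : ∃ i ∈ s, #s * mLoad p σ i ≤ ∑ j, p j := by
  obtain ⟨i, hi, hmin⟩ := s.exists_min_image (mLoad p σ) hs
  refine ⟨i, hi, ?_⟩
  calc (#s : ℝ) * mLoad p σ i ≤ ∑ i' ∈ s, mLoad p σ i' := by
        rw [← nsmul_eq_mul]; exact card_nsmul_le_sum _ _ _ hmin
    _ ≤ ∑ i', mLoad p σ i' :=
        sum_le_sum_of_subset_of_nonneg (subset_univ s) fun i _ _ => mLoad_nonneg hp σ i
    _ = ∑ j, p j := sum_mLoad p σ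

theorem exists_avoiding_mul_mLoad_le_sum {p : Fin n → ℝ} (hp : ∀ j, 0 ≤ p j) (σ : Fin n → Fin m)
    {U : Finset (Fin n)} {k : ℕ} (hU : #U ≤ k) (hk : k < m) :
    ∃ i, (∀ j, σ j = i → j ∉ U) ∧ ((m : ℝ) - k) * mLoad p σ i ≤ ∑ j, p j := by
  set T : Finset (Fin m) := {i | ∀ j, σ j = i → j ∉ U}
  have hTc : Tᶜ ⊆ U.image σ := by
    intro i hi
    simp only [T, mem_compl, mem_filter, mem_univ, true_and, not_forall, not_not] at hi
    obtain ⟨j, rfl, hj⟩ := hi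
    exact mem_image_of_mem σ hj
  have hcard : m - k ≤ #T := by
    have := (card_le_card hTc).trans (card_image_le.trans hU)
    rw [card_compl, Fintype.card_fin] at this
    omega
  obtain ⟨i, hi, hle⟩ := exists_mul_mLoad_le_sum hp σ (s := T) (card_pos.1 (by omega))
  refine ⟨i, (mem_filter.1 hi).2,
    (mul_le_mul_of_nonneg_right ?_ (mLoad_nonneg hp σ i)).trans hle⟩
  have : ((m - k : ℕ) : ℝ) ≤ #T := by exact_mod_cast hcard
  rwa [Nat.cast_sub hk.le] at this

end Loads

theorem IsLexOpt.mLoad_le_add {n m : ℕ} {p : Fin n → ℝ} {σ : Fin n → Fin m} (hσ : IsLexOpt p σ)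
    {j : Fin n} (hj : 0 < p j) (i : Fin m) : mLoad p σ (σ j) ≤ mLoad p σ i + p j := by
  by_contra! hcon
  have hne : i ≠ σ j := by rintro rfl; linarith
  -- Moving `j` to `i` leaves every load `≥ C_{σ j}` unchanged except that of `σ j` itself,
  -- which drops below `C_{σ j}`; the new load of `i` stays below `C_{σ j}` too.
  refine (hσ (Function.update σ j i)).not_gt
    (toLex_sortedDesc_lt_of_filter_eq_erase (i := σ j) fun t ht => ?_)
  ext x
  have hx := mLoad_update_add p σ j i x
  simp only [mem_filter, mem_erase, mem_univ, true_and]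
  by_cases hxj : x = σ j
  · subst hxj
    simp only [hne, if_true, if_false] at hx
    simp only [ne_eq, not_true_eq_false, false_and, iff_false, not_le]
    linarith
  · by_cases hxi : x = i
    · subst hxi
      simp only [Ne.symm hne, if_true, if_false] at hx
      simp only [ne_eq, hne, not_false_eq_true, true_and]
      constructor <;> intro h <;> linarith
    · simp only [Ne.symm hxj, Ne.symm hxi, if_false] at hx
      simp only [ne_eq, hxj, not_false_eq_true, true_and, add_zero] at hx ⊢
      rw [hx]

theorem le_one_add_natCeil_mul_of_sub_mul_le {k m : ℕ} (hk : k < m) {x y : ℝ} (hy : 0 ≤ y)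
    (h : (m - k) * x ≤ m * y) : x ≤ (1 + (⌈(k : ℝ) / ((m : ℝ) - k)⌉₊ : ℝ)) * y := by
  have hmk : (0 : ℝ) < m - k := sub_pos.2 (by exact_mod_cast hk)
  have hceil : (k : ℝ) ≤ (m - k) * ⌈(k : ℝ) / ((m : ℝ) - k)⌉₊ := by
    rw [← div_le_iff₀' hmk]
    exact Nat.le_ceil _
  refine le_of_mul_le_mul_left (h.trans ?_) hmk
  calc (m : ℝ) * y ≤ (m - k) * (1 + (⌈(k : ℝ) / ((m : ℝ) - k)⌉₊ : ℝ)) * y := by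
        gcongr; linarith
    _ = (m - k) * ((1 + (⌈(k : ℝ) / ((m : ℝ) - k)⌉₊ : ℝ)) * y) := by ring

theorem stmt12_general (n m : ℕ) (p : Fin n → ℝ) (hp : ∀ j, 0 < p j)
    (σ : Fin n → Fin m) (hσ : IsLexOpt p σ)
    (f : ℝ) (hf : 1 ≤ f) (k : ℕ) (hk : k < m)
    (phat : Fin n → ℝ) (h0 : ∀ j, 0 ≤ phat j) (h1 : ∀ j, phat j ≤ p j)
    (hunstable : (Finset.univ.filter (fun j => phat j < p j / f)).card ≤ k) :
    makespan phat σ ≤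
      2 * f * (1 + (⌈(k : ℝ) / ((m : ℝ) - k)⌉₊ : ℝ)) * optMakespan m phat := by
  have : NeZero m := ⟨by omega⟩
  set q : ℝ := (⌈(k : ℝ) / ((m : ℝ) - k)⌉₊ : ℝ)
  set OPT := optMakespan m phat
  have hOPT : 0 ≤ OPT := optMakespan_nonneg h0
  obtain ⟨i₀, hi₀_stable, hi₀_avg⟩ := exists_avoiding_mul_mLoad_le_sum h0 σ hunstable hk
  have hi₀_opt : mLoad phat σ i₀ ≤ (1 + q) * OPT :=
    le_one_add_natCeil_mul_of_sub_mul_le hk hOPT (hi₀_avg.trans (sum_le_mul_optMakespan phat))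
  have hi₀_p : mLoad p σ i₀ ≤ f * mLoad phat σ i₀ := mLoad_le_mul_mLoad fun j hj => by
    have hj_stable : p j / f ≤ phat j := not_lt.1 fun h => hi₀_stable j hj (by simpa using h)
    rwa [div_le_iff₀ (by linarith), mul_comm] at hj_stable
  have hOPT_le : OPT ≤ f * ((1 + q) * OPT) := by
    rw [← mul_assoc]
    exact le_mul_of_one_le_left hOPT (one_le_mul_of_one_le_of_one_le hf (by simp [q]))
  refine makespan_le fun i => ?_
  rcases ({j | σ j = i} : Finset (Fin n)).eq_empty_or_nonempty with hempty | ⟨j, hj⟩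
  · rw [mLoad, hempty, sum_empty]
    exact mul_nonneg (by positivity) hOPT
  obtain rfl : σ j = i := (mem_filter.1 hj).2
  calc mLoad phat σ (σ j) ≤ mLoad p σ (σ j) - p j + phat j := by
        linarith [mLoad_sub_le_mLoad_sub h1 σ j]
    _ ≤ mLoad p σ i₀ + phat j := by linarith [hσ.mLoad_le_add (hp j) i₀]
    _ ≤ f * ((1 + q) * OPT) + f * ((1 + q) * OPT) :=
        add_le_add (hi₀_p.trans (by gcongr)) ((le_optMakespan_of_nonneg h0 j).trans hOPT_le)
    _ = 2 * f * (1 + q) * OPT := by ring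

/-- Type-1 (reductions/cancellations only) recovery guarantee: keeping a LexOpt
assignment after reductions with at most `k < m` unstable jobs (reduced by a factor
exceeding `f`) yields makespan at most `2f·(1 + ⌈k/(m-k)⌉)·C*_max(m, p̂)`. -/
theorem stmt12 (n m : ℕ) (hm : 2 ≤ m) (p : Fin n → ℝ) (hp : ∀ j, 0 < p j)
    (σ : Fin n → Fin m) (hσ : IsLexOpt p σ)
    (f : ℝ) (hf : 1 ≤ f) (k : ℕ) (hk : k < m)
    (phat : Fin n → ℝ) (h0 : ∀ j, 0 ≤ phat j) (h1 : ∀ j, phat j ≤ p j)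
    (hunstable : (Finset.univ.filter (fun j => phat j < p j / f)).card ≤ k) :
    makespan phat σ ≤
      2 * f * (1 + (⌈(k : ℝ) / ((m : ℝ) - k)⌉₊ : ℝ)) * optMakespan m phat :=
  stmt12_general n m p hp σ hσ f hf k hk phat h0 h1 hunstable
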